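/- arXiv:1310.5905 — 8 statements merged into one kernel-verified Lean document; each statement's English description precedes it below -/
import Mathlib

section
/- Let α > 0, θ ∈ (−π/2, π/2), and t₁ < t₂ be real numbers with t₂ − t₁ > 1, and suppose arcsinh(α·t₂) − arcsinh(α·t₁) = α·cos θ. Then α < Λ(t₂ − t₁, θ), where Λ(T, θ) = sup{ α > 0 : α·T > exp(α·cos θ / 2) − 1 }. -/
/-- `Λ(T, θ) = sup{ α > 0 : α·T > exp(α·cos θ / 2) − 1 }`. -/
noncomputable def Lam (T θ : ℝ) : ℝ :=
  sSup {α : ℝ | 0 < α ∧ α * T > Real.exp (α * Real.cos θ / 2) - 1}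

lemma sinh_sub_sinh' (x y : ℝ) :
    Real.sinh x - Real.sinh y = 2 * Real.cosh ((x + y) / 2) * Real.sinh ((x - y) / 2) := by
  rw [Real.cosh_eq, Real.sinh_eq, Real.sinh_eq, Real.sinh_eq]
  have e1 : Real.exp ((x + y) / 2) * Real.exp ((x - y) / 2) = Real.exp x := by
    rw [← Real.exp_add]; ring_nf
  have e2 : Real.exp ((x + y) / 2) * Real.exp (-((x - y) / 2)) = Real.exp y := by
    rw [← Real.exp_add]; ring_nf
  have e3 : Real.exp (-((x + y) / 2)) * Real.exp ((x - y) / 2) = Real.exp (-y) := by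
    rw [← Real.exp_add]; ring_nf
  have e4 : Real.exp (-((x + y) / 2)) * Real.exp (-((x - y) / 2)) = Real.exp (-x) := by
    rw [← Real.exp_add]; ring_nf
  nlinarith [e1, e2, e3, e4]

/-- If `α > 0`, `θ ∈ (−π/2, π/2)`, `t₁ < t₂` with `t₂ − t₁ > 1`, and
`arcsinh(α t₂) − arcsinh(α t₁) = α cos θ`, then `α < Λ(t₂ − t₁, θ)`. -/
theorem stmt_3 (α θ t₁ t₂ : ℝ) (hα : 0 < α)
    (hθ : θ ∈ Set.Ioo (-(Real.pi / 2)) (Real.pi / 2))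
    (ht : t₁ < t₂) (hT : t₂ - t₁ > 1)
    (h : Real.arsinh (α * t₂) - Real.arsinh (α * t₁) = α * Real.cos θ) :
    α < Lam (t₂ - t₁) θ := by
  have hc : 0 < Real.cos θ := Real.cos_pos_of_mem_Ioo hθ
  set c := Real.cos θ with hcdef
  set T := t₂ - t₁ with hTdef
  have hspos : 0 < α * c / 2 := by positivity
  -- Step 1: α itself satisfies the defining inequality.
  have key : α * T > Real.exp (α * c / 2) - 1 := by
    have h2 : α * T = Real.sinh (Real.arsinh (α * t₂)) - Real.sinh (Real.arsinh (α * t₁)) := by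
      simp [Real.sinh_arsinh, hTdef]; ring
    rw [h2, sinh_sub_sinh']
    have h4 : (Real.arsinh (α * t₂) - Real.arsinh (α * t₁)) / 2 = α * c / 2 := by
      rw [h]
    rw [h4]
    have hsinh : 0 < Real.sinh (α * c / 2) := Real.sinh_pos_iff.2 hspos
    have hcosh : 1 ≤ Real.cosh ((Real.arsinh (α * t₂) + Real.arsinh (α * t₁)) / 2) :=
      Real.one_le_cosh _
    have h5 : 2 * Real.sinh (α * c / 2) = Real.exp (α * c / 2) - Real.exp (-(α * c / 2)) := by
      rw [Real.sinh_eq]; ring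
    have h6 : Real.exp (-(α * c / 2)) < 1 := Real.exp_lt_one_iff.2 (by linarith)
    nlinarith
  set S := {β : ℝ | 0 < β ∧ β * T > Real.exp (β * c / 2) - 1} with hS
  have hbdd : BddAbove S := by
    refine ⟨8 * T / c ^ 2, fun β hβ => ?_⟩
    obtain ⟨hβ0, hβT⟩ := hβ
    have hq : 1 + β * c / 2 + (β * c / 2) ^ 2 / 2 ≤ Real.exp (β * c / 2) :=
      Real.quadratic_le_exp_of_nonneg (by positivity)
    rw [le_div_iff₀ (by positivity : (0:ℝ) < c ^ 2)]
    nlinarith [mul_pos hβ0 hc, sq_nonneg (β * c)]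
  -- Step 2: find β > α still in S, by continuity.
  have hcont : Continuous fun β : ℝ => β * T - (Real.exp (β * c / 2) - 1) := by
    continuity
  have hopen : IsOpen {β : ℝ | 0 < β * T - (Real.exp (β * c / 2) - 1)} :=
    isOpen_lt continuous_const hcont
  have hmem : α ∈ {β : ℝ | 0 < β * T - (Real.exp (β * c / 2) - 1)} := by
    simp only [Set.mem_setOf_eq]; linarith
  obtain ⟨ε, hε, hball⟩ := Metric.isOpen_iff.1 hopen α hmem
  have hβmem : α + ε / 2 ∈ S := by
    have : α + ε / 2 ∈ Metric.ball α ε := by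
      simp only [Metric.mem_ball, Real.dist_eq]
      rw [abs_lt]; constructor <;> linarith
    have h7 := hball this
    simp only [Set.mem_setOf_eq] at h7
    exact ⟨by linarith, by linarith⟩
  have hle : α + ε / 2 ≤ sSup S := le_csSup hbdd hβmem
  have : Lam T θ = sSup S := rfl
  rw [this]
  linarith
end

section
/- For all real numbers τ₁ < τ₂, one has τ₂ − τ₁ > exp( (arcsinh(τ₂) − arcsinh(τ₁)) / 2 ) − 1. -/
/-- For all real numbers `τ₁ < τ₂`, one has
`τ₂ − τ₁ > exp((arcsinh τ₂ − arcsinh τ₁)/2) − 1`. -/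
theorem stmt_6 (τ₁ τ₂ : ℝ) (h : τ₁ < τ₂) :
    τ₂ - τ₁ > Real.exp ((Real.arsinh τ₂ - Real.arsinh τ₁) / 2) - 1 := by
  set a := Real.arsinh τ₁ with ha
  set b := Real.arsinh τ₂ with hb
  have hab : a < b := Real.arsinh_lt_arsinh.2 h
  have h1 : τ₂ - τ₁ = Real.sinh b - Real.sinh a := by
    rw [ha, hb, Real.sinh_arsinh, Real.sinh_arsinh]
  set w := (b - a) / 2 with hw
  set m := (a + b) / 2 with hm
  have hws : w > 0 := by rw [hw]; linarith
  have h2 : Real.sinh b - Real.sinh a = 2 * Real.sinh w * Real.cosh m := by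
    have : b = m + w := by rw [hw, hm]; ring
    have ha' : a = m - w := by rw [hw, hm]; ring
    rw [this, ha', Real.sinh_add, Real.sinh_sub]; ring
  have h3 : Real.cosh m ≥ 1 := Real.one_le_cosh m
  have h4 : Real.sinh w = (Real.exp w - Real.exp (-w)) / 2 := Real.sinh_eq w
  have h5 : Real.exp (-w) < 1 := Real.exp_lt_one_iff.2 (by linarith)
  have h6 : Real.exp w > 1 := by rw [← Real.exp_zero]; exact Real.exp_lt_exp.2 hws
  have h7 : Real.exp (-w) > 0 := Real.exp_pos _
  rw [h1, h2]
  nlinarith [h3, h4, h5, h6]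
end

section
/- For every μᵤ > 0 and every μᵥ ∈ ℝ, there exists a unique pair (τ₁, τ₂) of real numbers satisfying arcsinh(τ₂) − arcsinh(τ₁) = μᵤ and √(1+τ₂²) − √(1+τ₁²) = μᵥ. -/
lemma sqrt_one_add_sinh_sq (t : ℝ) :
    Real.sqrt (1 + Real.sinh t ^ 2) = Real.cosh t := by
  have h : 1 + Real.sinh t ^ 2 = Real.cosh t ^ 2 := by
    have := Real.cosh_sq t; linarith
  rw [h, Real.sqrt_sq (le_of_lt (Real.cosh_pos t))]

lemma cosh_sub_cosh' (x y : ℝ) :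
    Real.cosh x - Real.cosh y =
      2 * Real.sinh ((x + y) / 2) * Real.sinh ((x - y) / 2) := by
  rw [Real.cosh_eq, Real.cosh_eq, Real.sinh_eq, Real.sinh_eq]
  have h1 : Real.exp x = Real.exp ((x + y) / 2) * Real.exp ((x - y) / 2) := by
    rw [← Real.exp_add]; ring_nf
  have h2 : Real.exp y = Real.exp ((x + y) / 2) * Real.exp (-((x - y) / 2)) := by
    rw [← Real.exp_add]; ring_nf
  have h3 : Real.exp (-x) = Real.exp (-((x + y) / 2)) * Real.exp (-((x - y) / 2)) := by
    rw [← Real.exp_add]; ring_nf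
  have h4 : Real.exp (-y) = Real.exp (-((x + y) / 2)) * Real.exp ((x - y) / 2) := by
    rw [← Real.exp_add]; ring_nf
  rw [h1, h2, h3, h4]; ring

/-- For every `μᵤ > 0` and `μᵥ ∈ ℝ` there is a unique pair `(τ₁, τ₂)` with
`arcsinh τ₂ − arcsinh τ₁ = μᵤ` and `√(1+τ₂²) − √(1+τ₁²) = μᵥ`. -/
theorem stmt_10 (μᵤ μᵥ : ℝ) (hμ : 0 < μᵤ) :
    ∃! p : ℝ × ℝ,
      Real.arsinh p.2 - Real.arsinh p.1 = μᵤ ∧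
      Real.sqrt (1 + p.2 ^ 2) - Real.sqrt (1 + p.1 ^ 2) = μᵥ := by
  have hs : 0 < Real.sinh (μᵤ / 2) := Real.sinh_pos_iff.2 (by linarith)
  set c : ℝ := μᵥ / (2 * Real.sinh (μᵤ / 2)) with hc
  set s : ℝ := Real.arsinh c - μᵤ / 2 with hsdef
  refine ⟨(Real.sinh s, Real.sinh (s + μᵤ)), ⟨?_, ?_⟩, ?_⟩
  · simp [Real.arsinh_sinh]
  · rw [sqrt_one_add_sinh_sq, sqrt_one_add_sinh_sq, cosh_sub_cosh']
    have e1 : (s + μᵤ + s) / 2 = Real.arsinh c := by rw [hsdef]; ring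
    have e2 : (s + μᵤ - s) / 2 = μᵤ / 2 := by ring
    rw [e1, e2, Real.sinh_arsinh, hc]
    field_simp
  · rintro ⟨t₁, t₂⟩ ⟨h1, h2⟩
    set a := Real.arsinh t₁ with ha
    have hb : Real.arsinh t₂ = a + μᵤ := by linarith
    have ht1 : t₁ = Real.sinh a := (Real.sinh_arsinh t₁).symm
    have ht2 : t₂ = Real.sinh (a + μᵤ) := by
      rw [← hb, Real.sinh_arsinh]
    rw [ht1, ht2, sqrt_one_add_sinh_sq, sqrt_one_add_sinh_sq, cosh_sub_cosh'] at h2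
    have e1 : (a + μᵤ + a) / 2 = a + μᵤ / 2 := by ring
    have e2 : (a + μᵤ - a) / 2 = μᵤ / 2 := by ring
    rw [e1, e2] at h2
    have hcs : Real.sinh (a + μᵤ / 2) = c := by
      rw [hc, ← h2]; field_simp
    have haeq : a + μᵤ / 2 = Real.arsinh c := by
      rw [← hcs, Real.arsinh_sinh]
    have has : a = s := by rw [hsdef, ← haeq]; ring
    rw [ht1, ht2, has]
end

section
/- Let μᵤ > 0 and μᵥ ∈ ℝ, and let τ be the unique real number satisfying √(1 + sinh(arcsinh(τ) + μᵤ)²) − √(1 + τ²) = μᵥ. Then T_LO < τ < T_HI, where T_LO = −exp(μᵤ)·max{1/2, (1−μᵥ)/μᵤ} and T_HI = max{0, (1+μᵥ)/μᵤ}. -/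
set_option maxHeartbeats 1000000

/-- Square-root form of `cosh`. -/
lemma stmt_11_sqrt_cosh (x : ℝ) : Real.sqrt (1 + Real.sinh x ^ 2) = Real.cosh x := by
  rw [show 1 + Real.sinh x ^ 2 = Real.cosh x ^ 2 by rw [Real.cosh_sq]; ring,
    Real.sqrt_sq (Real.cosh_pos x).le]

/-- Strict convexity of `cosh`: it lies strictly above its tangent lines. -/
lemma stmt_11_cosh_tangent (x h : ℝ) (hh : h ≠ 0) :
    Real.cosh x + h * Real.sinh x < Real.cosh (x + h) := by
  have e1 := Real.add_one_lt_exp hh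
  have e2 := Real.add_one_lt_exp (neg_ne_zero.mpr hh)
  have p1 := Real.exp_pos x
  have p2 := Real.exp_pos (-x)
  have h3 : Real.exp (x + h) = Real.exp x * Real.exp h := Real.exp_add x h
  have h4 : Real.exp (-(x + h)) = Real.exp (-x) * Real.exp (-h) := by
    rw [← Real.exp_add]; ring_nf
  rw [Real.cosh_eq, Real.sinh_eq, Real.cosh_eq, h3, h4]
  nlinarith [mul_pos p1 (show (0:ℝ) < Real.exp h - 1 - h by linarith),
    mul_pos p2 (show (0:ℝ) < Real.exp (-h) - 1 + h by linarith)]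

/-- If `μᵤ > 0`, `μᵥ ∈ ℝ`, and `τ` satisfies
`√(1 + sinh(arcsinh τ + μᵤ)²) − √(1 + τ²) = μᵥ`, then `T_LO < τ < T_HI` where
`T_LO = −exp(μᵤ)·max{1/2, (1−μᵥ)/μᵤ}` and `T_HI = max{0, (1+μᵥ)/μᵤ}`. -/
theorem stmt_11 (μᵤ μᵥ τ : ℝ) (hμ : 0 < μᵤ)
    (hτ : Real.sqrt (1 + Real.sinh (Real.arsinh τ + μᵤ) ^ 2)
        - Real.sqrt (1 + τ ^ 2) = μᵥ) :
    -Real.exp μᵤ * max (1 / 2) ((1 - μᵥ) / μᵤ) < τ ∧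
    τ < max 0 ((1 + μᵥ) / μᵤ) := by
  set a := Real.arsinh τ with ha
  have hsa : Real.sinh a = τ := Real.sinh_arsinh τ
  have heq : Real.cosh (a + μᵤ) - Real.cosh a = μᵥ := by
    rw [← hτ, stmt_11_sqrt_cosh, ← hsa, stmt_11_sqrt_cosh]
  -- Upper bound
  have hup : τ < max 0 ((1 + μᵥ) / μᵤ) := by
    have h1 := stmt_11_cosh_tangent a μᵤ hμ.ne'
    have h2 : μᵤ * τ < μᵥ := by rw [← hsa]; linarith
    have h3 : τ < (1 + μᵥ) / μᵤ := by
      rw [lt_div_iff₀ hμ]; nlinarith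
    exact h3.trans_le (le_max_right _ _)
  refine ⟨?_, hup⟩
  -- Lower bound
  set m := a + μᵤ / 2 with hm
  set c := Real.sinh m with hc
  have h2 : μᵥ = 2 * Real.sinh (μᵤ / 2) * c := by
    rw [← heq, show a + μᵤ = m + μᵤ / 2 by rw [hm]; ring,
      show a = m - μᵤ / 2 by rw [hm]; ring, Real.cosh_add, Real.cosh_sub, hc]
    ring
  have hτm : τ = c * Real.cosh (μᵤ / 2) - Real.cosh m * Real.sinh (μᵤ / 2) := by
    rw [← hsa, show a = m - μᵤ / 2 by rw [hm]; ring, Real.sinh_sub, hc]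
  have hcm : Real.cosh m ≤ 1 + |c| := by
    nlinarith [Real.cosh_sq m, Real.cosh_pos m, sq_abs c, abs_nonneg c]
  set E := Real.exp (μᵤ / 2) with hE
  have hE3 : μᵤ / 2 + 1 < E := Real.add_one_lt_exp (by positivity : μᵤ / 2 ≠ 0)
  have hE1 : 1 < E := by linarith
  have hE0 : 0 < E := by linarith
  have hEinv : Real.exp (-(μᵤ / 2)) = E⁻¹ := by rw [Real.exp_neg]
  have hEi : E * E⁻¹ = 1 := mul_inv_cancel₀ (by positivity)
  have hEipos : 0 < E⁻¹ := by positivity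
  have hEilt : E⁻¹ < 1 := inv_lt_one_of_one_lt₀ hE1
  have hsinh : Real.sinh (μᵤ / 2) = (E - E⁻¹) / 2 := by
    rw [Real.sinh_eq, hEinv, ← hE]
  have hcosh : Real.cosh (μᵤ / 2) = (E + E⁻¹) / 2 := by
    rw [Real.cosh_eq, hEinv, ← hE]
  have hexpμ : Real.exp μᵤ = E ^ 2 := by
    rw [hE, sq, ← Real.exp_add]; ring_nf
  have hE4 : μᵤ + 1 < E ^ 2 := by rw [← hexpμ]; exact Real.add_one_lt_exp hμ.ne'
  have hspos : 0 < (E - E⁻¹) / 2 := by linarith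
  have hMhalf : (1:ℝ) / 2 ≤ max (1 / 2) ((1 - μᵥ) / μᵤ) := le_max_left _ _
  rcases le_or_gt 0 c with hc0 | hc0
  · -- c ≥ 0: τ ≥ c·E⁻¹ - sinh(μᵤ/2) ≥ -sinh(μᵤ/2) > -E²/2
    have habs : |c| = c := abs_of_nonneg hc0
    rw [habs] at hcm
    have hτlb : c * E⁻¹ - (E - E⁻¹) / 2 ≤ τ := by
      rw [hτm, hsinh, hcosh]
      nlinarith [mul_nonneg hc0 hspos.le]
    have hlt : -(E ^ 2) / 2 < c * E⁻¹ - (E - E⁻¹) / 2 := by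
      nlinarith [mul_nonneg hc0 hEipos.le, mul_pos hE0 (show (0:ℝ) < E - 1 by linarith)]
    have hmono : -Real.exp μᵤ * max (1 / 2) ((1 - μᵥ) / μᵤ) ≤ -(E ^ 2) / 2 := by
      rw [hexpμ]
      have := mul_le_mul_of_nonneg_left hMhalf (sq_nonneg E)
      linarith
    linarith
  · -- c < 0: τ ≥ c·E - sinh(μᵤ/2), use M ≥ (1 - μᵥ)/μᵤ
    have habs : |c| = -c := abs_of_neg hc0
    rw [habs] at hcm
    have hτlb : c * E - (E - E⁻¹) / 2 ≤ τ := by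
      rw [hτm, hsinh, hcosh]
      nlinarith [mul_nonneg (neg_nonneg.mpr hc0.le) hspos.le]
    have hMv : (1 - μᵥ) / μᵤ ≤ max (1 / 2) ((1 - μᵥ) / μᵤ) := le_max_right _ _
    have hkey : -(E ^ 2) * ((1 - μᵥ) / μᵤ) < c * E - (E - E⁻¹) / 2 := by
      rw [show -(E ^ 2) * ((1 - μᵥ) / μᵤ) = -(E ^ 2) * (1 - μᵥ) / μᵤ by ring,
        div_lt_iff₀ hμ, h2, hsinh]
      have hq1 : c * E ^ 2 * E⁻¹ = c * E := by
        rw [sq]; rw [mul_assoc, mul_assoc, hEi, mul_one]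
      nlinarith [mul_pos (neg_pos.mpr hc0)
          (mul_pos hE0 (show (0:ℝ) < E ^ 2 - 1 - μᵤ by linarith)),
        mul_pos hE0 (show (0:ℝ) < E - μᵤ / 2 by linarith),
        mul_pos hμ hEipos, hq1]
    have hmono : -Real.exp μᵤ * max (1 / 2) ((1 - μᵥ) / μᵤ) ≤
        -(E ^ 2) * ((1 - μᵥ) / μᵤ) := by
      rw [hexpμ]
      have := mul_le_mul_of_nonneg_left hMv (sq_nonneg E)
      linarith
    linarith
end

section
/- Let τ₁ < τ₂ < 0 be real numbers, and set μᵤ = arcsinh(τ₂) − arcsinh(τ₁) and μᵥ = √(1+τ₂²) − √(1+τ₁²). Then μᵥ < 0 and τ₁ > −exp(μᵤ)·(1 − μᵥ)/μᵤ. -/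
private lemma key_ineq (x y : ℝ) (hx : 0 < x) (hy : 1 < y) (hxy : x * y < 1) :
    x ^ 2 * (y - 1) ^ 2 < 2 * x * y := by
  have hy0 : 0 < y := by linarith
  have hxy0 : 0 < x * y := mul_pos hx hy0
  have h1 : (x * y) ^ 2 < x * y := by nlinarith
  have h2 : (y - 1) ^ 2 < 2 * y ^ 2 := by nlinarith
  have h3 : (x * y) ^ 2 * (y - 1) ^ 2 < (x * y) * (2 * y ^ 2) := by
    calc (x * y) ^ 2 * (y - 1) ^ 2 ≤ (x * y) * (y - 1) ^ 2 := by
          nlinarith [sq_nonneg (y - 1)]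
      _ < (x * y) * (2 * y ^ 2) := by exact mul_lt_mul_of_pos_left h2 hxy0
  have hy2 : (0:ℝ) < y ^ 2 := by positivity
  have h4 : x ^ 2 * (y - 1) ^ 2 * y ^ 2 < 2 * x * y * y ^ 2 := by nlinarith [h3]
  exact lt_of_mul_lt_mul_right h4 hy2.le

set_option maxHeartbeats 1000000 in
/-- If `τ₁ < τ₂ < 0`, with `μᵤ = arcsinh τ₂ − arcsinh τ₁` and
`μᵥ = √(1+τ₂²) − √(1+τ₁²)`, then `μᵥ < 0` and `τ₁ > −exp(μᵤ)·(1−μᵥ)/μᵤ`. -/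
theorem stmt_13 (τ₁ τ₂ : ℝ) (h12 : τ₁ < τ₂) (h2 : τ₂ < 0) :
    Real.sqrt (1 + τ₂ ^ 2) - Real.sqrt (1 + τ₁ ^ 2) < 0 ∧
    τ₁ > -Real.exp (Real.arsinh τ₂ - Real.arsinh τ₁) *
        (1 - (Real.sqrt (1 + τ₂ ^ 2) - Real.sqrt (1 + τ₁ ^ 2))) /
        (Real.arsinh τ₂ - Real.arsinh τ₁) := by
  have h1 : τ₁ < 0 := h12.trans h2
  set s₁ := Real.sqrt (1 + τ₁ ^ 2) with hs₁
  set s₂ := Real.sqrt (1 + τ₂ ^ 2) with hs₂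
  have hs₁sq : s₁ ^ 2 = 1 + τ₁ ^ 2 := Real.sq_sqrt (by positivity)
  have hs₂sq : s₂ ^ 2 = 1 + τ₂ ^ 2 := Real.sq_sqrt (by positivity)
  have hs₁pos : 0 < s₁ := Real.sqrt_pos.mpr (by positivity)
  have hs₂pos : 0 < s₂ := Real.sqrt_pos.mpr (by positivity)
  have hv : s₂ < s₁ := by
    rw [hs₁, hs₂]
    apply Real.sqrt_lt_sqrt (by positivity)
    nlinarith
  refine ⟨by linarith, ?_⟩
  set a := Real.arsinh τ₁ with ha
  set b := Real.arsinh τ₂ with hb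
  have hab : a < b := Real.arsinh_lt_arsinh.mpr h12
  have hμ : 0 < b - a := by linarith
  have hea : Real.exp a = τ₁ + s₁ := Real.exp_arsinh τ₁
  have heb : Real.exp b = τ₂ + s₂ := Real.exp_arsinh τ₂
  have hxy : Real.exp (b - a) * Real.exp a = Real.exp b := by
    rw [← Real.exp_add]; ring_nf
  have hxpos : 0 < τ₁ + s₁ := hea ▸ Real.exp_pos a
  have hb1 : Real.exp b < 1 := Real.exp_lt_one_iff.mpr (Real.arsinh_neg_iff.mpr h2)
  have hle : b - a + 1 ≤ Real.exp (b - a) := Real.add_one_le_exp (b - a)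
  have hy1 : 1 < Real.exp (b - a) := by
    have : 0 < Real.exp (b - a) - 1 := by nlinarith
    linarith
  set y := Real.exp (b - a) with hy
  set x := τ₁ + s₁ with hxdef
  have hx1 : x * (s₁ - τ₁) = 1 := by rw [hxdef]; nlinarith
  have e3 : x * y = τ₂ + s₂ := by
    rw [← heb, ← hxy, hea, hxdef]; ring
  have hu1 : x * y < 1 := by rw [e3, ← heb]; exact hb1
  have key := key_ineq x y hxpos hy1 hu1
  have e1 : 2 * x * τ₁ = x ^ 2 - 1 := by linear_combination (-x) * hxdef.symm - hx1
  have e2 : 2 * x * s₁ = x ^ 2 + 1 := by linear_combination (-x) * hxdef.symm + hx1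
  have e4 : (x * y) * (s₂ - τ₂) = 1 := by rw [e3]; nlinarith
  have e5 : 2 * (x * y) * s₂ = (x * y) ^ 2 + 1 := by
    linear_combination (-(x * y)) * e3 + e4
  have ident : 2 * x * (τ₁ * (y - 1) + y * (1 - (s₂ - s₁))) =
      2 * x * y - x ^ 2 * (y - 1) ^ 2 := by
    linear_combination (y - 1) * e1 + y * e2 - e5
  have h2xP : 0 < 2 * x * (τ₁ * (y - 1) + y * (1 - (s₂ - s₁))) := by
    rw [ident]; linarith
  have hP : 0 < τ₁ * (y - 1) + y * (1 - (s₂ - s₁)) := by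
    rcases mul_pos_iff.mp h2xP with ⟨_, h⟩ | ⟨h, _⟩
    · exact h
    · linarith
  have step : τ₁ * (y - 1) ≤ τ₁ * (b - a) := by nlinarith
  rw [gt_iff_lt, div_lt_iff₀ hμ]
  nlinarith [hP, step]
end

section
/- Let 0 < τ₁ < τ₂ be real numbers, and set μᵤ = arcsinh(τ₂) − arcsinh(τ₁) and μᵥ = √(1+τ₂²) − √(1+τ₁²). Then τ₁ < (μᵥ + 1)/μᵤ. -/
/-- If `0 < τ₁ < τ₂`, with `μᵤ = arcsinh τ₂ − arcsinh τ₁` and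
`μᵥ = √(1+τ₂²) − √(1+τ₁²)`, then `τ₁ < (μᵥ + 1)/μᵤ`. -/
theorem stmt_14 (τ₁ τ₂ : ℝ) (h1 : 0 < τ₁) (h12 : τ₁ < τ₂) :
    τ₁ < ((Real.sqrt (1 + τ₂ ^ 2) - Real.sqrt (1 + τ₁ ^ 2)) + 1) /
        (Real.arsinh τ₂ - Real.arsinh τ₁) := by
  set A := Real.sqrt (1 + τ₂ ^ 2) with hAdef
  set B := Real.sqrt (1 + τ₁ ^ 2) with hBdef
  have hA2 : A ^ 2 = 1 + τ₂ ^ 2 := Real.sq_sqrt (by positivity)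
  have hB2 : B ^ 2 = 1 + τ₁ ^ 2 := Real.sq_sqrt (by positivity)
  have hA : 0 < A := Real.sqrt_pos.2 (by positivity)
  have hB : 0 < B := Real.sqrt_pos.2 (by positivity)
  have hden : 0 < Real.arsinh τ₂ - Real.arsinh τ₁ :=
    sub_pos.2 (Real.arsinh_strictMono h12)
  rw [lt_div_iff₀ hden]
  have hτB : 0 < τ₁ + B := by positivity
  have hμ : Real.arsinh τ₂ - Real.arsinh τ₁ ≤ (τ₂ + A) / (τ₁ + B) - 1 := by
    have h2 : Real.arsinh τ₂ = Real.log (τ₂ + A) := rfl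
    have h1' : Real.arsinh τ₁ = Real.log (τ₁ + B) := rfl
    have hτ2A : (0:ℝ) < τ₂ + A := by linarith
    rw [h2, h1', ← Real.log_div (ne_of_gt hτ2A) (ne_of_gt hτB)]
    exact Real.log_le_sub_one_of_pos (div_pos hτ2A hτB)
  -- key algebraic fact: τ₁τ₂ + 1 ≤ A*B
  have hkey : τ₁ * τ₂ + 1 ≤ A * B := by
    nlinarith [sq_nonneg (τ₁ - τ₂), sq_nonneg (A * B - (τ₁ * τ₂ + 1)), mul_pos hA hB]
  have hstep : τ₁ * ((τ₂ + A) / (τ₁ + B) - 1) ≤ A - B := by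
    rw [div_sub_one (ne_of_gt hτB), ← mul_div_assoc, div_le_iff₀ hτB]
    nlinarith [hkey, hB2]
  have := mul_le_mul_of_nonneg_left hμ h1.le
  nlinarith [hstep, this]
end

section
/- Let (u₁, v₁), (u₂, v₂), (δx, δy) ∈ ℝ² be boundary data, and set μ₁ = ‖(u₁, v₁)‖, μ₂ = ‖(u₂, v₂)‖, and T_MAX = μ₁ + μ₂ + √2·( (2δx − μ₁u₁ − μ₂u₂)² + (2δy − μ₁v₁ − μ₂v₂)² )^{1/4}. Then there exists T ≤ T_MAX and an admissible trajectory on [0, T] meeting the boundary data; in particular the minimal time T* satisfies T* ≤ T_MAX. -/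
/-- An admissible trajectory on `[0, T]`: a differentiable planar curve
`(x, y)` whose velocity is Lipschitz with constant `1` (in the Euclidean norm)
on `[0, T]`. -/
def IsAdmissible (T : ℝ) (x y : ℝ → ℝ) : Prop :=
  Differentiable ℝ x ∧ Differentiable ℝ y ∧
  ∀ s ∈ Set.Icc (0 : ℝ) T, ∀ t ∈ Set.Icc (0 : ℝ) T,
    Real.sqrt ((deriv x s - deriv x t) ^ 2 + (deriv y s - deriv y t) ^ 2) ≤ |s - t|

/-- The trajectory `(x, y)` on `[0, T]` meets the boundary data: initial
velocity `(u₁, v₁)`, final velocity `(u₂, v₂)`, displacement `(δx, δy)`. -/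
def MeetsBoundary (T u₁ v₁ u₂ v₂ δx δy : ℝ) (x y : ℝ → ℝ) : Prop :=
  deriv x 0 = u₁ ∧ deriv y 0 = v₁ ∧ deriv x T = u₂ ∧ deriv y T = v₂ ∧
  x T - x 0 = δx ∧ y T - y 0 = δy

/-- The minimal time `T*` for the boundary data. -/
noncomputable def minTime (u₁ v₁ u₂ v₂ δx δy : ℝ) : ℝ :=
  sInf {T : ℝ | 0 ≤ T ∧ ∃ x y : ℝ → ℝ,
    IsAdmissible T x y ∧ MeetsBoundary T u₁ v₁ u₂ v₂ δx δy x y}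

/-!
Three phases of unit acceleration suffice. Brake from `U₁` to rest in time `‖U₁‖`, covering
`(‖U₁‖ / 2) • U₁`; at the end, accelerate from rest to `U₂` in time `‖U₂‖`, covering
`(‖U₂‖ / 2) • U₂`. In between, the residual displacement `D` is covered starting and ending at
rest by accelerating towards `D` for time `√‖D‖` and then braking for as long, which takes
`2 √‖D‖ = √2 · (4‖D‖²)^(1/4)`. The velocity is a sum of clamped ramps `clampIcc τᵢ τᵢ₊₁`,
which are monotone and add up to a 1-Lipschitz function, so it is 1-Lipschitz.
-/

open Set Finset intervalIntegral NNReal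

def clampIcc (a b t : ℝ) : ℝ := max a (min b t)

namespace clampIcc

variable {a b c t : ℝ}

theorem monotone (a b : ℝ) : Monotone (clampIcc a b) :=
  fun _ _ h => max_le_max le_rfl (min_le_min le_rfl h)

theorem lipschitzWith (h : a ≤ b) : LipschitzWith 1 (clampIcc a b) :=
  (LipschitzWith.subtype_val (Icc a b)).comp (LipschitzWith.projIcc h) |>.weaken (by simp)

theorem of_le_left (ht : t ≤ a) : clampIcc a b t = a := by
  unfold clampIcc; grind

theorem of_mem (ht : t ∈ Icc a b) : clampIcc a b t = t := by
  unfold clampIcc; grind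

theorem of_right_le (hab : a ≤ b) (ht : b ≤ t) : clampIcc a b t = b := by
  unfold clampIcc; grind

theorem add_clampIcc (hab : a ≤ b) (hbc : b ≤ c) (t : ℝ) :
    clampIcc a b t + clampIcc b c t = clampIcc a c t + b := by
  unfold clampIcc; grind

theorem integral_sub_left {α β : ℝ} (haα : a ≤ α) (hαβ : α ≤ β) (hβb : β ≤ b) :
    ∫ t in a..b, (clampIcc α β t - α) = (β - α) ^ 2 / 2 + (b - β) * (β - α) := by
  have hc : Continuous fun t => clampIcc α β t - α :=
    (lipschitzWith hαβ).continuous.sub continuous_const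
  have h₁ : ∫ t in a..α, (clampIcc α β t - α) = ∫ _ in a..α, (0 : ℝ) :=
    integral_congr fun t ht => by
      rw [uIcc_of_le haα] at ht; simp [of_le_left ht.2]
  have h₂ : ∫ t in α..β, (clampIcc α β t - α) = ∫ t in α..β, (t - α) :=
    integral_congr fun t ht => by
      rw [uIcc_of_le hαβ] at ht; simp [of_mem ht]
  have h₃ : ∫ t in β..b, (clampIcc α β t - α) = ∫ _ in β..b, (β - α) :=
    integral_congr fun t ht => by
      rw [uIcc_of_le hβb] at ht; simp [of_right_le hαβ ht.1]
  rw [← integral_add_adjacent_intervals (hc.intervalIntegrable a α) (hc.intervalIntegrable α b),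
    ← integral_add_adjacent_intervals (hc.intervalIntegrable α β) (hc.intervalIntegrable β b),
    h₁, h₂, h₃, integral_sub intervalIntegrable_id intervalIntegrable_const]
  simp [integral_id]
  ring

end clampIcc

theorem sum_clampIcc_sub_partition {n : ℕ} {τ : Fin (n + 1) → ℝ} (hτ : Monotone τ) (t : ℝ) :
    ∑ i : Fin n, (clampIcc (τ i.castSucc) (τ i.succ) t - τ i.castSucc) =
      clampIcc (τ 0) (τ (Fin.last n)) t - τ 0 := by
  induction n with
  | zero => simp [clampIcc]
  | succ n ih =>
    rw [Fin.sum_univ_castSucc]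
    simp only [Fin.succ_castSucc, Fin.succ_last]
    have hinit := ih (hτ.comp Fin.strictMono_castSucc.monotone)
    simp only [Function.comp_apply, Fin.castSucc_zero] at hinit
    have hglue := clampIcc.add_clampIcc (hτ (Fin.zero_le (Fin.last n).castSucc))
      (hτ (Fin.castSucc_le_succ (Fin.last n))) t
    simp only [Fin.succ_last] at hglue
    linarith

variable {E : Type*} [NormedAddCommGroup E] [NormedSpace ℝ E]

theorem LipschitzWith.sum_smul_of_monotone {ι : Type*} (s : Finset ι) {f : ι → ℝ → ℝ}
    (hf : ∀ i ∈ s, Monotone (f i)) {e : ι → E} (he : ∀ i ∈ s, ‖e i‖ ≤ 1) {K : ℝ≥0}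
    (hK : LipschitzWith K fun t => ∑ i ∈ s, f i t) :
    LipschitzWith K fun t => ∑ i ∈ s, f i t • e i := by
  refine LipschitzWith.of_dist_le_mul fun x y => ?_
  wlog hxy : x ≤ y generalizing x y
  · rw [dist_comm, dist_comm x]; exact this y x (le_of_not_ge hxy)
  calc dist (∑ i ∈ s, f i x • e i) (∑ i ∈ s, f i y • e i)
      = ‖∑ i ∈ s, (f i y - f i x) • e i‖ := by
        rw [dist_comm, dist_eq_norm, ← Finset.sum_sub_distrib]; simp only [sub_smul]
    _ ≤ ∑ i ∈ s, (f i y - f i x) := by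
        refine (norm_sum_le _ _).trans (Finset.sum_le_sum fun i hi => ?_)
        rw [norm_smul, Real.norm_of_nonneg (sub_nonneg.2 (hf i hi hxy))]
        exact mul_le_of_le_one_right (sub_nonneg.2 (hf i hi hxy)) (he i hi)
    _ ≤ dist (∑ i ∈ s, f i x) (∑ i ∈ s, f i y) := by
        rw [Finset.sum_sub_distrib, dist_comm, Real.dist_eq]; exact le_abs_self _
    _ ≤ K * dist x y := hK.dist_le_mul x y

/-- The velocity that starts at `w₀` and has constant acceleration `e i` on `[τ i, τ (i + 1)]`. -/
def phaseVelocity {n : ℕ} (τ : Fin (n + 1) → ℝ) (e : Fin n → E) (w₀ : E) (t : ℝ) : E :=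
  w₀ + ∑ i, (clampIcc (τ i.castSucc) (τ i.succ) t - τ i.castSucc) • e i

namespace phaseVelocity

variable {n : ℕ} {τ : Fin (n + 1) → ℝ} (e : Fin n → E) (w₀ : E)

theorem lipschitzWith (hτ : Monotone τ) (he : ∀ i, ‖e i‖ ≤ 1) :
    LipschitzWith 1 (phaseVelocity τ e w₀) := by
  have hramp : LipschitzWith 1 fun t =>
      ∑ i : Fin n, (clampIcc (τ i.castSucc) (τ i.succ) t - τ i.castSucc) := by
    refine LipschitzWith.of_dist_le_mul fun s t => ?_
    simp only [sum_clampIcc_sub_partition hτ, dist_sub_right]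
    exact (clampIcc.lipschitzWith (hτ (Fin.zero_le _))).dist_le_mul s t
  have hmono : ∀ i ∈ (univ : Finset (Fin n)),
      Monotone fun t => clampIcc (τ i.castSucc) (τ i.succ) t - τ i.castSucc :=
    fun i _ _ _ h => sub_le_sub_right (clampIcc.monotone _ _ h) _
  have hsum := LipschitzWith.sum_smul_of_monotone univ hmono (fun i _ => he i) hramp
  exact LipschitzWith.of_dist_le_mul fun s t => by
    rw [phaseVelocity, phaseVelocity, dist_add_left]; exact hsum.dist_le_mul s t

theorem apply_left (hτ : Monotone τ) : phaseVelocity τ e w₀ (τ 0) = w₀ := by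
  simp [phaseVelocity, clampIcc.of_le_left (hτ (Fin.zero_le _))]

theorem apply_right (hτ : Monotone τ) :
    phaseVelocity τ e w₀ (τ (Fin.last n)) = w₀ + ∑ i, (τ i.succ - τ i.castSucc) • e i := by
  simp [phaseVelocity, clampIcc.of_right_le (hτ (Fin.castSucc_le_succ _)) (hτ (Fin.le_last _))]

variable [CompleteSpace E]

theorem integral (hτ : Monotone τ) :
    ∫ t in τ 0..τ (Fin.last n), phaseVelocity τ e w₀ t =
      (τ (Fin.last n) - τ 0) • w₀ + ∑ i, ((τ i.succ - τ i.castSucc) ^ 2 / 2 +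
        (τ (Fin.last n) - τ i.succ) * (τ i.succ - τ i.castSucc)) • e i := by
  have hramp (i : Fin n) :
      Continuous fun t => (clampIcc (τ i.castSucc) (τ i.succ) t - τ i.castSucc) • e i :=
    (((clampIcc.lipschitzWith (hτ (Fin.castSucc_le_succ i))).continuous.sub
      continuous_const).smul continuous_const)
  simp only [phaseVelocity]
  rw [integral_add intervalIntegrable_const
      ((continuous_finsetSum _ fun i _ => hramp i).intervalIntegrable _ _),
    integral_finsetSum fun i _ => (hramp i).intervalIntegrable _ _]
  simp only [integral_const, intervalIntegral.integral_smul_const]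
  congr 1
  refine Finset.sum_congr rfl fun i _ => ?_
  rw [clampIcc.integral_sub_left (hτ (Fin.zero_le _)) (hτ (Fin.castSucc_le_succ i))
    (hτ (Fin.le_last _))]

end phaseVelocity

theorem exists_norm_le_one_eq_norm_smul (x : E) : ∃ u : E, ‖u‖ ≤ 1 ∧ x = ‖x‖ • u := by
  refine ⟨‖x‖⁻¹ • x, by simpa using inv_norm_smul_mem_unitClosedBall x, ?_⟩
  rcases eq_or_ne x 0 with rfl | hx
  · simp
  · rw [smul_inv_smul₀ (norm_ne_zero_iff.2 hx)]

noncomputable def timeBound (U₁ U₂ Δ : E) : ℝ :=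
  ‖U₁‖ + ‖U₂‖ + 2 * √‖Δ - (‖U₁‖ / 2) • U₁ - (‖U₂‖ / 2) • U₂‖

theorem timeBound_nonneg (U₁ U₂ Δ : E) : 0 ≤ timeBound U₁ U₂ Δ := by
  unfold timeBound; positivity

theorem exists_lipschitzWith_velocity [CompleteSpace E] (U₁ U₂ Δ : E) :
    ∃ w : ℝ → E, LipschitzWith 1 w ∧ w 0 = U₁ ∧ w (timeBound U₁ U₂ Δ) = U₂ ∧
      ∫ t in 0..timeBound U₁ U₂ Δ, w t = Δ := by
  set D := Δ - (‖U₁‖ / 2) • U₁ - (‖U₂‖ / 2) • U₂ with hD_def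
  set r := √‖D‖
  obtain ⟨a, ha, hU₁⟩ := exists_norm_le_one_eq_norm_smul U₁
  obtain ⟨b, hb, hD⟩ := exists_norm_le_one_eq_norm_smul D
  obtain ⟨c, hc, hU₂⟩ := exists_norm_le_one_eq_norm_smul U₂
  have hr : ‖D‖ = r ^ 2 := (Real.sq_sqrt (norm_nonneg D)).symm
  let τ : Fin 5 → ℝ := ![0, ‖U₁‖, ‖U₁‖ + r, ‖U₁‖ + 2 * r, ‖U₁‖ + 2 * r + ‖U₂‖]
  have hτ : Monotone τ := Fin.monotone_iff_le_succ.2 fun i => by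
    have := Real.sqrt_nonneg ‖D‖
    fin_cases i <;> simp [τ] <;> linarith [norm_nonneg U₁, norm_nonneg U₂]
  have hτ₀ : τ 0 = 0 := rfl
  have hτ₄ : τ (Fin.last 4) = timeBound U₁ U₂ Δ := by
    simp [τ, timeBound, D, r]; ring
  let e : Fin 4 → E := ![-a, b, -b, c]
  have he : ∀ i, ‖e i‖ ≤ 1 := fun i => by fin_cases i <;> simpa [e]
  refine ⟨phaseVelocity τ e U₁, phaseVelocity.lipschitzWith e U₁ hτ he,
    phaseVelocity.apply_left e U₁ hτ, ?_, ?_⟩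
  · rw [← hτ₄, phaseVelocity.apply_right e U₁ hτ]
    simp [Fin.sum_univ_four, τ, e]
    linear_combination (norm := module) hU₁ - hU₂
  · rw [← hτ₀, ← hτ₄, phaseVelocity.integral e U₁ hτ]
    simp [Fin.sum_univ_four, τ, e]
    rw [hr] at hD
    linear_combination (norm := module)
      (‖U₁‖ + 2 * r + ‖U₂‖ - ‖U₁‖ / 2) • hU₁ - hD - (‖U₂‖ / 2) • hU₂ + hD_def

theorem exists_isAdmissible_meetsBoundary {T : ℝ} {w : ℝ → ℂ} (hc : Continuous w)
    (hw : LipschitzOnWith 1 w (Icc 0 T)) :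
    ∃ x y : ℝ → ℝ, IsAdmissible T x y ∧
      MeetsBoundary T (w 0).re (w 0).im (w T).re (w T).im
        (∫ t in 0..T, w t).re (∫ t in 0..T, w t).im x y := by
  have hre : Continuous fun t => (w t).re := Complex.continuous_re.comp hc
  have him : Continuous fun t => (w t).im := Complex.continuous_im.comp hc
  have hx := Continuous.deriv_integral _ hre 0
  have hy := Continuous.deriv_integral _ him 0
  refine ⟨fun t => ∫ s in 0..t, (w s).re, fun t => ∫ s in 0..t, (w s).im,
    ⟨fun t => (hre.integral_hasStrictDerivAt 0 t).hasDerivAt.differentiableAt,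
      fun t => (him.integral_hasStrictDerivAt 0 t).hasDerivAt.differentiableAt,
      fun s hs t ht => ?_⟩,
    hx 0, hy 0, hx T, hy T, ?_, ?_⟩
  · rw [hx, hx, hy, hy, ← Complex.dist_eq_re_im, ← Real.dist_eq]
    simpa using hw.dist_le_mul s hs t ht
  · simpa using Complex.reCLM.intervalIntegral_comp_comm (hc.intervalIntegrable 0 T)
  · simpa using Complex.imCLM.intervalIntegral_comp_comm (hc.intervalIntegrable 0 T)

theorem two_mul_sqrt_norm_eq (p q : ℝ) :
    2 * √‖(⟨p, q⟩ : ℂ)‖ = √2 * ((2 * p) ^ 2 + (2 * q) ^ 2) ^ ((1 : ℝ) / 4) := by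
  have h4 : (4 : ℝ) ^ ((1 : ℝ) / 4) = √2 := by
    rw [show (4 : ℝ) = 2 ^ (2 : ℝ) by norm_num, ← Real.rpow_mul (by norm_num),
      Real.sqrt_eq_rpow]
    norm_num
  have hX : (p ^ 2 + q ^ 2) ^ ((1 : ℝ) / 4) = √√(p ^ 2 + q ^ 2) := by
    rw [Real.sqrt_eq_rpow, Real.sqrt_eq_rpow, ← Real.rpow_mul (by positivity)]
    norm_num
  rw [Complex.norm_eq_sqrt_sq_add_sq, show (2 * p) ^ 2 + (2 * q) ^ 2 = 4 * (p ^ 2 + q ^ 2) by ring,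
    Real.mul_rpow (by norm_num) (by positivity), h4, hX, ← mul_assoc,
    Real.mul_self_sqrt zero_le_two]

theorem timeBound_complex (u₁ v₁ u₂ v₂ δx δy : ℝ) :
    timeBound (⟨u₁, v₁⟩ : ℂ) ⟨u₂, v₂⟩ ⟨δx, δy⟩ =
      √(u₁ ^ 2 + v₁ ^ 2) + √(u₂ ^ 2 + v₂ ^ 2) +
        √2 * ((2 * δx - √(u₁ ^ 2 + v₁ ^ 2) * u₁ - √(u₂ ^ 2 + v₂ ^ 2) * u₂) ^ 2 +
          (2 * δy - √(u₁ ^ 2 + v₁ ^ 2) * v₁ - √(u₂ ^ 2 + v₂ ^ 2) * v₂) ^ 2) ^ ((1 : ℝ) / 4) := by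
  have hnorm (p q : ℝ) : ‖(⟨p, q⟩ : ℂ)‖ = √(p ^ 2 + q ^ 2) := Complex.norm_eq_sqrt_sq_add_sq _
  rw [timeBound, hnorm, hnorm]
  set μ₁ := √(u₁ ^ 2 + v₁ ^ 2)
  set μ₂ := √(u₂ ^ 2 + v₂ ^ 2)
  have hD : (⟨δx, δy⟩ : ℂ) - (μ₁ / 2) • ⟨u₁, v₁⟩ - (μ₂ / 2) • ⟨u₂, v₂⟩ =
      ⟨δx - μ₁ / 2 * u₁ - μ₂ / 2 * u₂, δy - μ₁ / 2 * v₁ - μ₂ / 2 * v₂⟩ := by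
    apply Complex.ext <;> simp
  rw [hD, two_mul_sqrt_norm_eq]
  ring_nf

/-- With `μ₁ = ‖(u₁,v₁)‖`, `μ₂ = ‖(u₂,v₂)‖` and
`T_MAX = μ₁ + μ₂ + √2·((2δx − μ₁u₁ − μ₂u₂)² + (2δy − μ₁v₁ − μ₂v₂)²)^(1/4)`,
there is a time `T ≤ T_MAX` and an admissible trajectory on `[0, T]` meeting
the boundary data; in particular `T* ≤ T_MAX`. -/
theorem stmt_17 (u₁ v₁ u₂ v₂ δx δy : ℝ) :
    (∃ T : ℝ, 0 ≤ T ∧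
      T ≤ Real.sqrt (u₁ ^ 2 + v₁ ^ 2) + Real.sqrt (u₂ ^ 2 + v₂ ^ 2) +
        Real.sqrt 2 *
          ((2 * δx - Real.sqrt (u₁ ^ 2 + v₁ ^ 2) * u₁
              - Real.sqrt (u₂ ^ 2 + v₂ ^ 2) * u₂) ^ 2 +
           (2 * δy - Real.sqrt (u₁ ^ 2 + v₁ ^ 2) * v₁
              - Real.sqrt (u₂ ^ 2 + v₂ ^ 2) * v₂) ^ 2) ^ ((1 : ℝ) / 4) ∧
      ∃ x y : ℝ → ℝ, IsAdmissible T x y ∧ MeetsBoundary T u₁ v₁ u₂ v₂ δx δy x y) ∧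
    minTime u₁ v₁ u₂ v₂ δx δy ≤
      Real.sqrt (u₁ ^ 2 + v₁ ^ 2) + Real.sqrt (u₂ ^ 2 + v₂ ^ 2) +
        Real.sqrt 2 *
          ((2 * δx - Real.sqrt (u₁ ^ 2 + v₁ ^ 2) * u₁
              - Real.sqrt (u₂ ^ 2 + v₂ ^ 2) * u₂) ^ 2 +
           (2 * δy - Real.sqrt (u₁ ^ 2 + v₁ ^ 2) * v₁
              - Real.sqrt (u₂ ^ 2 + v₂ ^ 2) * v₂) ^ 2) ^ ((1 : ℝ) / 4) := by
  obtain ⟨w, hw, hw₀, hwT, hΔ⟩ :=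
    exists_lipschitzWith_velocity (⟨u₁, v₁⟩ : ℂ) ⟨u₂, v₂⟩ ⟨δx, δy⟩
  obtain ⟨x, y, hadm, hmeet⟩ := exists_isAdmissible_meetsBoundary
    (T := timeBound (⟨u₁, v₁⟩ : ℂ) ⟨u₂, v₂⟩ ⟨δx, δy⟩) hw.continuous hw.lipschitzOnWith
  rw [hw₀, hwT, hΔ] at hmeet
  have hT := timeBound_nonneg (⟨u₁, v₁⟩ : ℂ) ⟨u₂, v₂⟩ ⟨δx, δy⟩
  rw [← timeBound_complex]
  exact ⟨⟨_, hT, le_rfl, x, y, hadm, hmeet⟩,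
    csInf_le ⟨0, fun _ hT' => hT'.1⟩ ⟨hT, x, y, hadm, hmeet⟩⟩
end

section
/- Let v ≠ 0 and u₁, u₂, T₁, T₂, δx, δy be real numbers satisfying δx = T₁(u₁ + T₁/2) + T₂(u₂ + T₂/2), δy = v·(T₁ + T₂), and u₂ − u₁ = T₁ − T₂. Then δx = δy·(u₁ + u₂)/(2v) + ( (δy/v)² − (u₂ − u₁)² )/4. Moreover, (δy/v)² − (u₂ − u₁)² = 0 if and only if T₁ = 0 or T₂ = 0. -/
/-!
Since `δy / v = T₁ + T₂` and `u₂ - u₁ = T₁ - T₂`, the quantity `(δy / v)² - (u₂ - u₁)²` is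
`(T₁ + T₂)² - (T₁ - T₂)² = 4 T₁ T₂`, which vanishes exactly when one of the two arcs is empty.
The displacement formula is then a polynomial identity in `u₁, T₁, T₂` after eliminating
`u₂ = u₁ + T₁ - T₂`.
-/

theorem add_sq_sub_sub_sq {R : Type*} [CommRing R] (a b : R) :
    (a + b) ^ 2 - (a - b) ^ 2 = 4 * (a * b) := by
  ring

theorem add_sq_sub_sub_sq_eq_zero_iff {R : Type*} [CommRing R] [NoZeroDivisors R] [CharZero R]
    {a b : R} : (a + b) ^ 2 - (a - b) ^ 2 = 0 ↔ a = 0 ∨ b = 0 := by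
  rw [add_sq_sub_sub_sq, mul_eq_zero, mul_eq_zero]
  simp

theorem bangBang_displacement {K : Type*} [Field K] [CharZero K] (u₁ u₂ T₁ T₂ : K)
    (hu : u₂ - u₁ = T₁ - T₂) :
    T₁ * (u₁ + T₁ / 2) + T₂ * (u₂ + T₂ / 2) =
      (T₁ + T₂) * (u₁ + u₂) / 2 + ((T₁ + T₂) ^ 2 - (T₁ - T₂) ^ 2) / 4 := by
  obtain rfl : u₂ = u₁ + (T₁ - T₂) := by rw [← hu, add_sub_cancel]
  ring

/-- Kinematics of a horizontal bang-bang trajectory: if `v ≠ 0`,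
`δx = T₁(u₁ + T₁/2) + T₂(u₂ + T₂/2)`, `δy = v(T₁ + T₂)`, and `u₂ − u₁ = T₁ − T₂`,
then `δx = δy(u₁+u₂)/(2v) + ((δy/v)² − (u₂−u₁)²)/4`, and
`(δy/v)² − (u₂−u₁)² = 0` iff `T₁ = 0` or `T₂ = 0`. -/
theorem stmt_19 (v u₁ u₂ T₁ T₂ δx δy : ℝ) (hv : v ≠ 0)
    (hx : δx = T₁ * (u₁ + T₁ / 2) + T₂ * (u₂ + T₂ / 2))
    (hy : δy = v * (T₁ + T₂))
    (hu : u₂ - u₁ = T₁ - T₂) :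
    δx = δy * (u₁ + u₂) / (2 * v) + ((δy / v) ^ 2 - (u₂ - u₁) ^ 2) / 4 ∧
    ((δy / v) ^ 2 - (u₂ - u₁) ^ 2 = 0 ↔ T₁ = 0 ∨ T₂ = 0) := by
  have hS : δy / v = T₁ + T₂ := by rw [hy, mul_div_cancel_left₀ _ hv]
  have hxS : δy * (u₁ + u₂) / (2 * v) = (T₁ + T₂) * (u₁ + u₂) / 2 := by
    rw [mul_comm 2 v, ← div_div, mul_div_right_comm, hS]
  rw [hS, hu, hxS, hx]
  exact ⟨bangBang_displacement u₁ u₂ T₁ T₂ hu, add_sq_sub_sub_sq_eq_zero_iff⟩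
end
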